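/- Let S and A be nonempty finite sets, r : S×A → ℝ, γ ∈ (0,1), P a transition kernel, τ > 0 and α ∈ [0,1). Let (π_k, q_k)_{k≥0} be the error-free M-VI(α,τ) sequence (all ε_k = 0) started from a full-support policy π₀ and any q₀ : S×A → ℝ. Set τ' = (1−α)τ and let q_*^{τ'} be the unique fixed point of the soft Bellman optimality operator L^{τ'} and π_*^{τ'} = softmax(q_*^{τ'}/τ'). Then for every (s,a) ∈ S×A, as k → ∞: q_k(s,a) − ατ·ln π_k(s)(a) → q_*^{τ'}(s,a) and π_k(s)(a) → π_*^{τ'}(s)(a). -/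

import Mathlib

/-!
Write `ψ_k = q_k - ατ ln π_k`, `V_k = τ ln ∑ exp (q_k / τ)` and `V_* = τ' ln ∑ exp (q_* / τ')`.
Then `ψ_{k+1} = r + γ P V_k` and `q_* = r + γ P V_*`, so `q_* - ψ_{k+1} = γ P (V_* - V_k)`.
Since `exp (q_k / τ) = π_k ^ α exp (ψ_k / τ)`, Hölder's inequality gives
`V_k - V_* ≤ max_a (ψ_k - q_*)`, so the positive part of `ψ_k - q_*`, and with it the negative
part of `V_* - V_k`, decays like `γ ^ k`. In the other direction, comparing both soft values
through `π_*` gives `V_* - V_k ≤ ⟨π_*, q_* - ψ_k⟩ + τ KL(π_* ‖ π_k) - τ KL(π_* ‖ π_{k+1})`.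
Summed over `k`, the KL terms telescope and the `⟨π_*, q_* - ψ_k⟩` terms return `γ` times the
previous partial sums, so the partial sums of `V_* - V_k` are bounded above. Together with the
summable lower bound this forces `V_* - V_k → 0`, hence `ψ_k → q_*`. Finally
`τ ln π_{k+1} - τ ln π_* = α (τ ln π_k - τ ln π_*) + (ψ_k - q_*) + (V_* - V_k)`, and a
contraction driven by a vanishing input converges to `0`, so `π_k → π_*`.
-/

open Finset Filter Topology

lemma sum_mul_le_of_forall_le {ι : Type*} [Fintype ι] {p f : ι → ℝ} {c : ℝ}
    (hp0 : ∀ i, 0 ≤ p i) (hp1 : ∑ i, p i = 1) (hf : ∀ i, f i ≤ c) : ∑ i, p i * f i ≤ c :=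
  calc ∑ i, p i * f i ≤ ∑ i, p i * c :=
        sum_le_sum fun i _ => mul_le_mul_of_nonneg_left (hf i) (hp0 i)
    _ = c := by rw [← sum_mul, hp1, one_mul]

lemma sum_mul_eq_of_forall_eq {ι : Type*} [Fintype ι] {p f : ι → ℝ} {c : ℝ}
    (hp1 : ∑ i, p i = 1) (hf : ∀ i, f i = c) : ∑ i, p i * f i = c := by
  simp only [hf, ← sum_mul, hp1, one_mul]

section Softmax

open Real

variable {A : Type*} [Fintype A]

noncomputable def logSumExp (τ : ℝ) (f : A → ℝ) : ℝ :=
  τ * log (∑ a, exp (f a / τ))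

noncomputable def softmax (τ : ℝ) (f : A → ℝ) (a : A) : ℝ :=
  exp (f a / τ) / ∑ a', exp (f a' / τ)

noncomputable def relEntropy (p q : A → ℝ) : ℝ :=
  ∑ a, p a * (log (p a) - log (q a))

lemma sum_exp_pos [Nonempty A] (f : A → ℝ) : 0 < ∑ a, exp (f a) :=
  sum_pos (fun _ _ => exp_pos _) univ_nonempty

lemma softmax_pos [Nonempty A] (τ : ℝ) (f : A → ℝ) (a : A) : 0 < softmax τ f a :=
  div_pos (exp_pos _) (sum_exp_pos _)

lemma sum_softmax [Nonempty A] (τ : ℝ) (f : A → ℝ) : ∑ a, softmax τ f a = 1 := by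
  simp only [softmax, ← sum_div, div_self (sum_exp_pos _).ne']

lemma mul_log_softmax [Nonempty A] {τ : ℝ} (hτ : τ ≠ 0) (f : A → ℝ) (a : A) :
    τ * log (softmax τ f a) = f a - logSumExp τ f := by
  rw [softmax, log_div (exp_ne_zero _) (sum_exp_pos _).ne', log_exp, logSumExp]
  field_simp

lemma sum_softmax_mul_sub_mul_log [Nonempty A] {τ : ℝ} (hτ : τ ≠ 0) (f : A → ℝ) :
    ∑ a, softmax τ f a * (f a - τ * log (softmax τ f a)) = logSumExp τ f :=
  sum_mul_eq_of_forall_eq (sum_softmax τ f) fun a => by rw [mul_log_softmax hτ]; ring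

lemma relEntropy_nonneg {p q : A → ℝ} (hp : ∀ a, 0 < p a) (hq : ∀ a, 0 < q a)
    (hp1 : ∑ a, p a = 1) (hq1 : ∑ a, q a = 1) : 0 ≤ relEntropy p q := by
  have key : ∀ a, p a - q a ≤ p a * (log (p a) - log (q a)) := fun a => by
    have h := mul_le_mul_of_nonneg_left (log_le_sub_one_of_pos (div_pos (hq a) (hp a))) (hp a).le
    rw [log_div (hq a).ne' (hp a).ne', mul_sub, mul_sub, mul_div_cancel₀ _ (hp a).ne', mul_one] at h
    linarith
  calc (0 : ℝ) = ∑ a, (p a - q a) := by rw [sum_sub_distrib, hp1, hq1, sub_self]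
    _ ≤ relEntropy p q := sum_le_sum fun a _ => key a

lemma logSumExp_eq_sum_add_relEntropy [Nonempty A] {τ : ℝ} (hτ : τ ≠ 0) (f : A → ℝ)
    {p : A → ℝ} (hp1 : ∑ a, p a = 1) :
    logSumExp τ f = ∑ a, p a * (f a - τ * log (p a)) + τ * relEntropy p (softmax τ f) := by
  calc logSumExp τ f
      = ∑ a, p a * (f a - τ * log (p a) + τ * (log (p a) - log (softmax τ f a))) :=
        (sum_mul_eq_of_forall_eq hp1 fun a => by linear_combination -(mul_log_softmax hτ f a)).symm
    _ = _ := by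
        rw [relEntropy, mul_sum, ← sum_add_distrib]
        exact sum_congr rfl fun a _ => by ring

lemma logSumExp_le_add [Nonempty A] {τ : ℝ} (hτ : 0 < τ) {f g : A → ℝ} {c : ℝ}
    (hfg : ∀ a, f a ≤ g a + c) : logSumExp τ f ≤ logSumExp τ g + c := by
  have hsum : ∑ a, exp (f a / τ) ≤ exp (c / τ) * ∑ a, exp (g a / τ) := by
    rw [mul_sum]
    gcongr with a
    rw [← exp_add, ← add_div, add_comm c]
    gcongr
    exact hfg a
  calc logSumExp τ f ≤ τ * log (exp (c / τ) * ∑ a, exp (g a / τ)) := by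
        unfold logSumExp; gcongr
    _ = logSumExp τ g + c := by
        rw [log_mul (exp_ne_zero _) (sum_exp_pos _).ne', log_exp, logSumExp]
        field_simp
        ring

/-- Hölder's inequality with weights `p` and exponent `1 / (1 - α)`. -/
lemma logSumExp_add_mul_log_le [Nonempty A] {τ α : ℝ} (hτ : 0 < τ) (hα0 : 0 ≤ α) (hα1 : α < 1)
    {p : A → ℝ} (hp : ∀ a, 0 < p a) (hp1 : ∑ a, p a = 1) (f : A → ℝ) :
    logSumExp τ (fun a => f a + α * τ * log (p a)) ≤ logSumExp ((1 - α) * τ) f := by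
  have h1α : 0 < 1 - α := by linarith
  set z : A → ℝ := fun a => exp (f a / τ + (α - 1) * log (p a))
  have hpz : ∀ a, exp ((f a + α * τ * log (p a)) / τ) = p a * z a := fun a => by
    rw [← exp_log (hp a), ← exp_add, log_exp]
    congr 1
    field_simp
    ring
  have hpzp : ∀ a, p a * z a ^ (1 - α)⁻¹ = exp (f a / ((1 - α) * τ)) := fun a => by
    rw [← exp_mul, ← exp_log (hp a), ← exp_add, log_exp]
    congr 1
    field_simp
    ring
  have holder := inner_le_weight_mul_Lp_of_nonneg univ (one_le_inv₀ h1α |>.2 (by linarith)) p z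
    (fun a => (hp a).le) (fun a => (exp_pos _).le)
  simp only [hp1, one_rpow, one_mul, inv_inv, hpzp] at holder
  calc logSumExp τ (fun a => f a + α * τ * log (p a)) = τ * log (∑ a, p a * z a) := by
        simp only [logSumExp, hpz]
    _ ≤ τ * log ((∑ a, exp (f a / ((1 - α) * τ))) ^ (1 - α)) := by
        gcongr
        exact sum_pos (fun a _ => mul_pos (hp a) (exp_pos _)) univ_nonempty
    _ = logSumExp ((1 - α) * τ) f := by
        rw [log_rpow (sum_exp_pos _), logSumExp]
        ring

lemma logSumExp_sub_logSumExp_le_of_forall_le [Nonempty A] {τ α c : ℝ} (hτ : 0 < τ)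
    (hα0 : 0 ≤ α) (hα1 : α < 1) {p f g : A → ℝ} (hp : ∀ a, 0 < p a) (hp1 : ∑ a, p a = 1)
    (hfg : ∀ a, f a - α * τ * log (p a) - g a ≤ c) :
    logSumExp τ f - logSumExp ((1 - α) * τ) g ≤ c := by
  rw [sub_le_iff_le_add']
  calc logSumExp τ f = logSumExp τ fun a => f a - α * τ * log (p a) + α * τ * log (p a) := by
        simp only [sub_add_cancel]
    _ ≤ logSumExp ((1 - α) * τ) fun a => f a - α * τ * log (p a) :=
        logSumExp_add_mul_log_le hτ hα0 hα1 hp hp1 _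
    _ ≤ logSumExp ((1 - α) * τ) g + c :=
        logSumExp_le_add (mul_pos (sub_pos.2 hα1) hτ) fun a => by linarith [hfg a]

lemma logSumExp_sub_logSumExp_le [Nonempty A] {τ α : ℝ} (hτ : 0 < τ) (hα1 : α < 1)
    {p p' μ f g : A → ℝ} (hp : ∀ a, 0 < p a) (hp1 : ∑ a, p a = 1) (hp' : p' = softmax τ f)
    (hμ : μ = softmax ((1 - α) * τ) g) :
    logSumExp ((1 - α) * τ) g - logSumExp τ f ≤
      -∑ a, μ a * (f a - α * τ * log (p a) - g a) + (τ * relEntropy μ p - τ * relEntropy μ p') := by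
  have hτα : 0 < (1 - α) * τ := mul_pos (sub_pos.2 hα1) hτ
  have hμ1 : ∑ a, μ a = 1 := hμ ▸ sum_softmax _ g
  have hf := logSumExp_eq_sum_add_relEntropy hτ.ne' f hμ1
  have hg := sum_softmax_mul_sub_mul_log hτα.ne' g
  have hKL := relEntropy_nonneg (hμ ▸ softmax_pos _ g) hp hμ1 hp1
  rw [← hμ] at hg
  rw [← hp'] at hf
  have hsum : ∑ a, μ a * (g a - (1 - α) * τ * log (μ a)) - ∑ a, μ a * (f a - τ * log (μ a))
      = -∑ a, μ a * (f a - α * τ * log (p a) - g a) + α * τ * relEntropy μ p := by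
    rw [relEntropy, mul_sum, ← sum_neg_distrib, ← sum_sub_distrib, ← sum_add_distrib]
    exact sum_congr rfl fun a _ => by ring
  nlinarith [mul_nonneg (mul_nonneg (sub_nonneg.2 hα1.le) hτ.le) hKL]

lemma mul_log_sub_mul_log_eq [Nonempty A] {τ α : ℝ} (hτ : τ ≠ 0) (hτα : (1 - α) * τ ≠ 0)
    {p p' μ f g : A → ℝ} (hp' : p' = softmax τ f) (hμ : μ = softmax ((1 - α) * τ) g) (a : A) :
    τ * log (p' a) - τ * log (μ a)
      = α * (τ * log (p a) - τ * log (μ a))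
        + ((f a - α * τ * log (p a) - g a) + (logSumExp ((1 - α) * τ) g - logSumExp τ f)) := by
  subst hp' hμ
  linear_combination mul_log_softmax hτ f a - mul_log_softmax hτα g a

end Softmax

section Sequences

open Real

lemma tendsto_zero_of_sum_range_le {u β : ℕ → ℝ} {C : ℝ} (hβ0 : ∀ k, 0 ≤ β k)
    (hβ : Summable β) (hu : ∀ k, -β k ≤ u k) (hsum : ∀ K, ∑ k ∈ range K, u k ≤ C) :
    Tendsto u atTop (𝓝 0) := by
  have huβ : Summable fun k => u k + β k := by
    refine summable_of_sum_range_le (c := C + ∑' k, β k) (fun k => by linarith [hu k]) fun K => ?_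
    rw [sum_add_distrib]
    exact add_le_add (hsum K) (hβ.sum_le_tsum _ fun k _ => hβ0 k)
  simpa using huβ.tendsto_atTop_zero.sub hβ.tendsto_atTop_zero

lemma tendsto_zero_of_eq_mul_add {α : ℝ} (hα0 : 0 ≤ α) (hα1 : α < 1) {y ε : ℕ → ℝ}
    (hy : ∀ k, y (k + 1) = α * y k + ε k) (hε : Tendsto ε atTop (𝓝 0)) :
    Tendsto y atTop (𝓝 0) := by
  rw [Metric.tendsto_atTop]
  intro δ hδ
  obtain ⟨N, hN⟩ := Metric.tendsto_atTop.1 hε ((1 - α) * (δ / 2)) (by nlinarith)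
  have hcontract : ∀ m, |y (N + m)| - δ / 2 ≤ α ^ m * (|y N| - δ / 2) := by
    intro m
    induction m with
    | zero => simp
    | succ m ih =>
      have hεN : |ε (N + m)| < (1 - α) * (δ / 2) := by
        simpa using hN (N + m) (Nat.le_add_right _ _)
      calc |y (N + (m + 1))| - δ / 2 ≤ α * |y (N + m)| + |ε (N + m)| - δ / 2 := by
            have h := abs_add_le (α * y (N + m)) (ε (N + m))
            rw [abs_mul, abs_of_nonneg hα0] at h
            rw [← add_assoc, hy]
            linarith
        _ ≤ α * (|y (N + m)| - δ / 2) := by linarith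
        _ ≤ α ^ (m + 1) * (|y N| - δ / 2) := by
            rw [pow_succ', mul_assoc]; exact mul_le_mul_of_nonneg_left ih hα0
  obtain ⟨M, hM⟩ := Metric.tendsto_atTop.1
    ((tendsto_pow_atTop_nhds_zero_of_lt_one hα0 hα1).mul_const (|y N| - δ / 2)) (δ / 2)
    (half_pos hδ)
  refine ⟨N + M, fun k hk => ?_⟩
  obtain ⟨m, rfl⟩ := Nat.exists_eq_add_of_le (le_trans (Nat.le_add_right N M) hk)
  have hm := hM m (by omega)
  rw [zero_mul, Real.dist_eq, sub_zero] at hm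
  rw [Real.dist_eq, sub_zero]
  linarith [hcontract m, le_abs_self (α ^ m * (|y N| - δ / 2))]

lemma tendsto_of_tendsto_mul_log_sub {u : ℕ → ℝ} {v τ : ℝ} (hτ : τ ≠ 0) (hu : ∀ k, 0 < u k)
    (hv : 0 < v) (h : Tendsto (fun k => τ * log (u k) - τ * log v) atTop (𝓝 0)) :
    Tendsto u atTop (𝓝 v) := by
  have hexp := ((h.div_const τ).add_const (log v)).rexp
  rw [zero_div, zero_add, exp_log hv] at hexp
  refine hexp.congr fun k => ?_
  rw [← mul_sub, mul_div_cancel_left₀ _ hτ, sub_add_cancel, exp_log (hu k)]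

end Sequences

section ErrorDynamics

variable {S A : Type*} [Fintype S] [Fintype A] {P : S × A → S → ℝ} {γ : ℝ}
  {e : ℕ → S × A → ℝ} {w : ℕ → S → ℝ}

lemma exists_neg_gap_le_mul_pow (hγ0 : 0 ≤ γ) (hP0 : ∀ sa s', 0 ≤ P sa s')
    (hP1 : ∀ sa, ∑ s', P sa s' = 1)
    (he : ∀ k s a, e (k + 1) (s, a) = -(γ * ∑ s', P (s, a) s' * w k s'))
    (hw : ∀ k s c, (∀ a, e k (s, a) ≤ c) → -w k s ≤ c) :
    ∃ B, 0 ≤ B ∧ ∀ k s, -w k s ≤ B * γ ^ k := by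
  obtain ⟨B, hB⟩ := Finite.bddAbove_range (e 0)
  have he_le : ∀ k sa, e k sa ≤ max B 0 * γ ^ k := by
    intro k
    induction k with
    | zero => exact fun sa => by simpa using le_max_of_le_left (hB ⟨sa, rfl⟩)
    | succ k ih =>
      rintro ⟨s, a⟩
      have hPw : ∑ s', P (s, a) s' * -w k s' ≤ max B 0 * γ ^ k :=
        sum_mul_le_of_forall_le (hP0 _) (hP1 _) fun s' => hw k s' _ fun a' => ih (s', a')
      simp only [mul_neg, sum_neg_distrib] at hPw
      rw [he, pow_succ', mul_left_comm, ← mul_neg]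
      exact mul_le_mul_of_nonneg_left hPw hγ0
  exact ⟨max B 0, le_max_right _ _, fun k s => hw k s _ fun a => he_le k (s, a)⟩

lemma exists_sum_range_gap_le {μ : S → A → ℝ} {D : ℕ → S → ℝ} (hγ0 : 0 ≤ γ) (hγ1 : γ < 1)
    (hP0 : ∀ sa s', 0 ≤ P sa s') (hP1 : ∀ sa, ∑ s', P sa s' = 1)
    (hμ0 : ∀ s a, 0 ≤ μ s a) (hμ1 : ∀ s, ∑ a, μ s a = 1)
    (he : ∀ k s a, e (k + 1) (s, a) = -(γ * ∑ s', P (s, a) s' * w k s'))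
    (hD : ∀ k s, 0 ≤ D k s)
    (hw : ∀ k s, w k s ≤ -∑ a, μ s a * e k (s, a) + (D k s - D (k + 1) s)) :
    ∃ C, ∀ K s, ∑ k ∈ range K, w k s ≤ C := by
  set g : ℕ → S → ℝ := fun k s => -∑ a, μ s a * e k (s, a)
  obtain ⟨c, hc⟩ := Finite.bddAbove_range fun s => g 0 s + D 0 s
  have hg : ∀ K s, ∑ k ∈ range K, g (k + 1) s
      = γ * ∑ a, μ s a * ∑ s', P (s, a) s' * ∑ k ∈ range K, w k s' := by
    intro K s
    simp only [g, he, mul_neg, neg_neg, sum_neg_distrib, mul_sum]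
    rw [sum_comm]
    refine sum_congr rfl fun a _ => ?_
    rw [sum_comm]
    exact sum_congr rfl fun s' _ => sum_congr rfl fun k _ => by ring
  refine ⟨max c 0 / (1 - γ), fun K => ?_⟩
  induction K with
  | zero => exact fun s => by simp only [sum_range_zero]; positivity
  | succ K ih =>
    intro s
    have hPW : ∑ a, μ s a * ∑ s', P (s, a) s' * ∑ k ∈ range K, w k s' ≤ max c 0 / (1 - γ) :=
      sum_mul_le_of_forall_le (hμ0 s) (hμ1 s) fun a =>
        sum_mul_le_of_forall_le (hP0 _) (hP1 _) ih
    calc ∑ k ∈ range (K + 1), w k s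
        ≤ ∑ k ∈ range (K + 1), (g k s + (D k s - D (k + 1) s)) := sum_le_sum fun k _ => hw k s
      _ = g 0 s + D 0 s + γ * ∑ a, μ s a * ∑ s', P (s, a) s' * ∑ k ∈ range K, w k s'
            - D (K + 1) s := by
        rw [sum_add_distrib, sum_range_sub', sum_range_succ', hg]; ring
      _ ≤ max c 0 + γ * (max c 0 / (1 - γ)) := by
        have hc0 : g 0 s + D 0 s ≤ c := hc ⟨s, rfl⟩
        linarith [le_max_left c 0, hD (K + 1) s, mul_le_mul_of_nonneg_left hPW hγ0]
      _ = max c 0 / (1 - γ) := by field_simp [(sub_pos.2 hγ1).ne']; ring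

theorem tendsto_gap_and_error_zero {μ : S → A → ℝ} {D : ℕ → S → ℝ} (hγ0 : 0 ≤ γ)
    (hγ1 : γ < 1) (hP0 : ∀ sa s', 0 ≤ P sa s') (hP1 : ∀ sa, ∑ s', P sa s' = 1)
    (hμ0 : ∀ s a, 0 ≤ μ s a) (hμ1 : ∀ s, ∑ a, μ s a = 1)
    (he : ∀ k s a, e (k + 1) (s, a) = -(γ * ∑ s', P (s, a) s' * w k s'))
    (hD : ∀ k s, 0 ≤ D k s)
    (hw_lower : ∀ k s c, (∀ a, e k (s, a) ≤ c) → -w k s ≤ c)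
    (hw_upper : ∀ k s, w k s ≤ -∑ a, μ s a * e k (s, a) + (D k s - D (k + 1) s)) :
    (∀ s, Tendsto (fun k => w k s) atTop (𝓝 0)) ∧ ∀ sa, Tendsto (fun k => e k sa) atTop (𝓝 0) := by
  obtain ⟨B, hB0, hB⟩ := exists_neg_gap_le_mul_pow hγ0 hP0 hP1 he hw_lower
  obtain ⟨C, hC⟩ := exists_sum_range_gap_le hγ0 hγ1 hP0 hP1 hμ0 hμ1 he hD hw_upper
  have hw : ∀ s, Tendsto (fun k => w k s) atTop (𝓝 0) := fun s =>
    tendsto_zero_of_sum_range_le (fun k => mul_nonneg hB0 (pow_nonneg hγ0 k))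
      ((summable_geometric_of_lt_one hγ0 hγ1).mul_left B) (fun k => neg_le.1 (hB k s))
      (fun K => hC K s)
  refine ⟨hw, fun ⟨s, a⟩ => (tendsto_add_atTop_iff_nat 1).1 ?_⟩
  simp only [he]
  simpa using ((tendsto_finsetSum univ fun s' _ => (hw s').const_mul (P (s, a) s')).const_mul γ).neg

end ErrorDynamics

lemma mvi_error_succ {S A : Type*} [Fintype S] [Fintype A] [Nonempty A] {r : S × A → ℝ}
    {P : S × A → S → ℝ} {γ τ τ' α : ℝ} {π : S → A → ℝ} {q q' qstar : S × A → ℝ} {s : S} {a : A}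
    (hτ : τ ≠ 0) (hπ : ∀ s, π s = softmax τ fun a => q (s, a))
    (hq' : q' (s, a) = r (s, a) + α * τ * Real.log (π s a)
      + γ * ∑ s', P (s, a) s' * ∑ a', π s' a' * (q (s', a') - τ * Real.log (π s' a')))
    (hqstar : qstar (s, a)
      = r (s, a) + γ * ∑ s', P (s, a) s' * logSumExp τ' fun a => qstar (s', a)) :
    q' (s, a) - α * τ * Real.log (π s a) - qstar (s, a)
      = -(γ * ∑ s', P (s, a) s' *
          ((logSumExp τ' fun a => qstar (s', a)) - logSumExp τ fun a => q (s', a))) := by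
  simp only [hq', hqstar, hπ, sum_softmax_mul_sub_mul_log hτ]
  simp only [mul_sub, sum_sub_distrib]
  ring

theorem stmt_11_general {S A : Type*} [Fintype S] [Fintype A] [Nonempty A]
    (r : S × A → ℝ) (γ : ℝ) (hγ : γ ∈ Set.Ioo (0 : ℝ) 1)
    (P : S × A → S → ℝ) (hP0 : ∀ sa s', 0 ≤ P sa s') (hP1 : ∀ sa, ∑ s', P sa s' = 1)
    (τ : ℝ) (hτ : 0 < τ) (α : ℝ) (hα : α ∈ Set.Ico (0 : ℝ) 1)
    (π : ℕ → S → A → ℝ) (q : ℕ → S × A → ℝ)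
    (hπ00 : ∀ s a, 0 < π 0 s a) (hπ01 : ∀ s, ∑ a, π 0 s a = 1)
    (hπ : ∀ k s a, π (k + 1) s a
      = Real.exp (q k (s, a) / τ) / ∑ a', Real.exp (q k (s, a') / τ))
    (hq : ∀ k s a, q (k + 1) (s, a)
      = r (s, a) + α * τ * Real.log (π (k + 1) s a)
        + γ * ∑ s', P (s, a) s' *
            (∑ a', π (k + 1) s' a' * (q k (s', a') - τ * Real.log (π (k + 1) s' a'))))
    (τ' : ℝ) (hτ' : τ' = (1 - α) * τ)
    (qstar : S × A → ℝ)
    (hqstar : ∀ s a, qstar (s, a)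
      = r (s, a) + γ * ∑ s', P (s, a) s' *
          (τ' * Real.log (∑ a', Real.exp (qstar (s', a') / τ'))))
    (πstar : S → A → ℝ)
    (hπstar : ∀ s a, πstar s a
      = Real.exp (qstar (s, a) / τ') / ∑ a', Real.exp (qstar (s, a') / τ')) :
    ∀ s a,
      Filter.Tendsto (fun k => q k (s, a) - α * τ * Real.log (π k s a))
        Filter.atTop (nhds (qstar (s, a))) ∧
      Filter.Tendsto (fun k => π k s a) Filter.atTop (nhds (πstar s a)) := by
  obtain ⟨hγ0, hγ1⟩ := hγ
  obtain ⟨hα0, hα1⟩ := hα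
  subst hτ'
  have hτα : 0 < (1 - α) * τ := mul_pos (sub_pos.2 hα1) hτ
  have hπ_succ : ∀ k s, π (k + 1) s = softmax τ fun a => q k (s, a) :=
    fun k s => funext (hπ k s)
  have hπstar_eq : ∀ s, πstar s = softmax ((1 - α) * τ) fun a => qstar (s, a) :=
    fun s => funext (hπstar s)
  have hπ_prob : ∀ k s, (∀ a, 0 < π k s a) ∧ ∑ a, π k s a = 1 := by
    rintro (_ | k) s
    · exact ⟨hπ00 s, hπ01 s⟩
    · rw [hπ_succ]; exact ⟨softmax_pos _ _, sum_softmax _ _⟩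
  have hπstar_prob : ∀ s, (∀ a, 0 < πstar s a) ∧ ∑ a, πstar s a = 1 := fun s => by
    rw [hπstar_eq]; exact ⟨softmax_pos _ _, sum_softmax _ _⟩
  obtain ⟨hw, he⟩ := tendsto_gap_and_error_zero (μ := πstar)
    (e := fun k sa => q k sa - α * τ * Real.log (π k sa.1 sa.2) - qstar sa)
    (w := fun k s =>
      logSumExp ((1 - α) * τ) (fun a => qstar (s, a)) - logSumExp τ fun a => q k (s, a))
    (D := fun k s => τ * relEntropy (πstar s) (π k s)) hγ0.le hγ1 hP0 hP1
    (hμ0 := fun s a => ((hπstar_prob s).1 a).le) (hμ1 := fun s => (hπstar_prob s).2)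
    (he := fun k s a => mvi_error_succ hτ.ne' (hπ_succ k) (hq k s a) (hqstar s a))
    (hD := fun k s => mul_nonneg hτ.le (relEntropy_nonneg (hπstar_prob s).1 (hπ_prob k s).1
      (hπstar_prob s).2 (hπ_prob k s).2))
    (hw_lower := fun k s c hc => by
      rw [neg_sub]
      exact logSumExp_sub_logSumExp_le_of_forall_le hτ hα0 hα1 (hπ_prob k s).1 (hπ_prob k s).2 hc)
    (hw_upper := fun k s => logSumExp_sub_logSumExp_le hτ hα1 (hπ_prob k s).1 (hπ_prob k s).2
      (hπ_succ k s) (hπstar_eq s))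
  intro s a
  refine ⟨tendsto_sub_nhds_zero_iff.1 (he (s, a)), ?_⟩
  refine tendsto_of_tendsto_mul_log_sub hτ.ne' (fun k => (hπ_prob k s).1 a) ((hπstar_prob s).1 a) ?_
  exact tendsto_zero_of_eq_mul_add hα0 hα1
    (fun k => mul_log_sub_mul_log_eq hτ.ne' hτα.ne' (hπ_succ k s) (hπstar_eq s) a)
    (by simpa using (he (s, a)).add (hw s))

/-- Convergence of error-free M-VI(α,τ) for `α ∈ [0,1)`: with `τ' = (1−α)τ`, `q_*^{τ'}`
the (unique) fixed point of the soft Bellman optimality operator `L^{τ'}`, and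
`π_*^{τ'} = softmax(q_*^{τ'}/τ')`, for every `(s,a)`:
`q_k(s,a) − ατ ln π_k(s)(a) → q_*^{τ'}(s,a)` and `π_k(s)(a) → π_*^{τ'}(s)(a)` as `k → ∞`. -/
theorem stmt_11 {S A : Type*} [Fintype S] [Fintype A] [Nonempty S] [Nonempty A]
    (r : S × A → ℝ) (γ : ℝ) (hγ : γ ∈ Set.Ioo (0 : ℝ) 1)
    (P : S × A → S → ℝ) (hP0 : ∀ sa s', 0 ≤ P sa s') (hP1 : ∀ sa, ∑ s', P sa s' = 1)
    (τ : ℝ) (hτ : 0 < τ) (α : ℝ) (hα : α ∈ Set.Ico (0 : ℝ) 1)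
    (π : ℕ → S → A → ℝ) (q : ℕ → S × A → ℝ)
    (hπ00 : ∀ s a, 0 < π 0 s a) (hπ01 : ∀ s, ∑ a, π 0 s a = 1)
    (hπ : ∀ k s a, π (k + 1) s a
      = Real.exp (q k (s, a) / τ) / ∑ a', Real.exp (q k (s, a') / τ))
    (hq : ∀ k s a, q (k + 1) (s, a)
      = r (s, a) + α * τ * Real.log (π (k + 1) s a)
        + γ * ∑ s', P (s, a) s' *
            (∑ a', π (k + 1) s' a' * (q k (s', a') - τ * Real.log (π (k + 1) s' a'))))
    (τ' : ℝ) (hτ' : τ' = (1 - α) * τ)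
    (qstar : S × A → ℝ)
    (hqstar : ∀ s a, qstar (s, a)
      = r (s, a) + γ * ∑ s', P (s, a) s' *
          (τ' * Real.log (∑ a', Real.exp (qstar (s', a') / τ'))))
    (πstar : S → A → ℝ)
    (hπstar : ∀ s a, πstar s a
      = Real.exp (qstar (s, a) / τ') / ∑ a', Real.exp (qstar (s, a') / τ')) :
    ∀ s a,
      Filter.Tendsto (fun k => q k (s, a) - α * τ * Real.log (π k s a))
        Filter.atTop (nhds (qstar (s, a))) ∧
      Filter.Tendsto (fun k => π k s a) Filter.atTop (nhds (πstar s a)) :=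
  stmt_11_general r γ hγ P hP0 hP1 τ hτ α hα π q hπ00 hπ01 hπ hq τ' hτ' qstar hqstar πstar hπstar
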